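/- With f, g continuous on [0,1] and Ψ_{n,k} defined as above on the standard dyadic tree, the uniform bound sup_{0≤k<2^{n-1}} sup_{t∈[0,1]} |Ψ_{n,k}(t)| ≤ 2^{−(n+1)/2}·‖g‖_∞·‖f‖_∞ holds for all n ≥ 1. -/

import Mathlib

open MeasureTheory intervalIntegral

/-- `h(t) = ∫₀ᵗ f(u)² du`. -/
noncomputable def hFun (f : ℝ → ℝ) (t : ℝ) : ℝ := ∫ u in (0:ℝ)..t, (f u) ^ 2

/-- Left endpoint `l_{n,k} = 2k·2⁻ⁿ` of the dyadic support `S_{n,k}`. -/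
noncomputable def lPt (n k : ℕ) : ℝ := (2 * k : ℝ) / 2 ^ n

/-- Midpoint `m_{n,k} = (2k+1)·2⁻ⁿ`. -/
noncomputable def mPt (n k : ℕ) : ℝ := (2 * k + 1 : ℝ) / 2 ^ n

/-- Right endpoint `r_{n,k} = 2(k+1)·2⁻ⁿ`. -/
noncomputable def rPt (n k : ℕ) : ℝ := (2 * k + 2 : ℝ) / 2 ^ n

/-- `L_{n,k} = √((h r − h m)/((h r − h l)(h m − h l)))`. -/
noncomputable def Lcoef (f : ℝ → ℝ) (n k : ℕ) : ℝ :=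
  Real.sqrt ((hFun f (rPt n k) - hFun f (mPt n k)) /
    ((hFun f (rPt n k) - hFun f (lPt n k)) * (hFun f (mPt n k) - hFun f (lPt n k))))

/-- `R_{n,k} = √((h m − h l)/((h r − h l)(h r − h m)))`. -/
noncomputable def Rcoef (f : ℝ → ℝ) (n k : ℕ) : ℝ :=
  Real.sqrt ((hFun f (mPt n k) - hFun f (lPt n k)) /
    ((hFun f (rPt n k) - hFun f (lPt n k)) * (hFun f (rPt n k) - hFun f (mPt n k))))

/-- The auxiliary Haar-like family `Φ_{n,k}`: `Φ_{0,0} = f/√(h 1 − h 0)` and, for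
`n > 0`, `L_{n,k}·f` on `[l,m)`, `−R_{n,k}·f` on `[m,r)`, `0` elsewhere. -/
noncomputable def Phi (f : ℝ → ℝ) (n k : ℕ) (t : ℝ) : ℝ :=
  if n = 0 then f t / Real.sqrt (hFun f 1 - hFun f 0)
  else if lPt n k ≤ t ∧ t < mPt n k then Lcoef f n k * f t
  else if mPt n k ≤ t ∧ t < rPt n k then -(Rcoef f n k * f t)
  else 0
/-- The Schauder-like basis `Ψ_{n,k}`: `Ψ_{0,0}(t) = g t (h t − h 0)/√(h 1 − h 0)`
and, for `n > 0`, `L_{n,k}·g(t)(h t − h l)` on `[l,m)`,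
`R_{n,k}·g(t)(h r − h t)` on `[m,r)`, `0` elsewhere. -/
noncomputable def Psi (f g : ℝ → ℝ) (n k : ℕ) (t : ℝ) : ℝ :=
  if n = 0 then g t * (hFun f t - hFun f 0) / Real.sqrt (hFun f 1 - hFun f 0)
  else if lPt n k ≤ t ∧ t < mPt n k then Lcoef f n k * (g t * (hFun f t - hFun f (lPt n k)))
  else if mPt n k ≤ t ∧ t < rPt n k then Rcoef f n k * (g t * (hFun f (rPt n k) - hFun f t))
  else 0

/-! With `a = h m − h l` and `b = h r − h m`, on `[l, m)` the factor `L·(h t − h l)` is at most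
`L·a = √(ab/(a+b)) ≤ √((a+b)/4)` (AM–GM), and symmetrically for `R·(h r − h t)` on `[m, r)`.
Since `[l, r)` has length `2^{1−n}`, `a + b = h r − h l ≤ ‖f‖²_∞ · 2^{1−n}`. -/

lemma hFun_sub_hFun {f : ℝ → ℝ} (hf : Continuous f) (a b : ℝ) :
    hFun f b - hFun f a = ∫ u in a..b, f u ^ 2 :=
  integral_interval_sub_left ((hf.pow 2).intervalIntegrable _ _) ((hf.pow 2).intervalIntegrable _ _)

lemma hFun_monotone {f : ℝ → ℝ} (hf : Continuous f) : Monotone (hFun f) := fun a b hab => by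
  have := hFun_sub_hFun hf a b ▸ integral_nonneg hab fun u _ => sq_nonneg (f u)
  linarith

lemma hFun_sub_hFun_le {f : ℝ → ℝ} (hf : Continuous f) {a b M : ℝ} (hab : a ≤ b)
    (hM : ∀ t ∈ Set.Icc a b, |f t| ≤ M) : hFun f b - hFun f a ≤ M ^ 2 * (b - a) := by
  rw [hFun_sub_hFun hf, ← abs_of_nonneg (sub_nonneg.2 hab)]
  refine (Real.le_norm_self _).trans (intervalIntegral.norm_integral_le_of_norm_le_const fun t ht => ?_)
  have hft := hM t (Set.Ioc_subset_Icc_self (Set.uIoc_of_le hab ▸ ht))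
  rw [Real.norm_eq_abs, abs_pow]
  exact pow_le_pow_left₀ (abs_nonneg _) hft 2

lemma sqrt_div_mul_sub_le {p q s x : ℝ} (hpq : p ≤ q) (hqs : q ≤ s) (hpx : p ≤ x) (hxq : x ≤ q) :
    √((s - q) / ((s - p) * (q - p))) * (x - p) ≤ √((s - p) / 4) := by
  have hA : 0 ≤ (s - q) / ((s - p) * (q - p)) :=
    div_nonneg (by linarith) (mul_nonneg (by linarith) (by linarith))
  rw [← Real.sqrt_sq (sub_nonneg.2 hpx), ← Real.sqrt_mul hA]
  refine Real.sqrt_le_sqrt ?_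
  rcases hpq.eq_or_lt with rfl | hpq
  · rw [le_antisymm hxq hpx, sub_self, zero_pow two_ne_zero, mul_zero]
    linarith
  have hsp : 0 < s - p := by linarith
  calc (s - q) / ((s - p) * (q - p)) * (x - p) ^ 2
      ≤ (s - q) / ((s - p) * (q - p)) * (q - p) ^ 2 := by gcongr
    _ = (s - q) * (q - p) / (s - p) := by field_simp
    _ ≤ (s - p) / 4 := by
      rw [div_le_div_iff₀ hsp (by norm_num)]; nlinarith [sq_nonneg (s + p - 2 * q)]

lemma sqrt_div_mul_sub_le' {p q s x : ℝ} (hpq : p ≤ q) (hqs : q ≤ s) (hqx : q ≤ x) (hxs : x ≤ s) :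
    √((q - p) / ((s - p) * (s - q))) * (s - x) ≤ √((s - p) / 4) := by
  simpa only [sub_neg_eq_add, neg_add_eq_sub] using
    sqrt_div_mul_sub_le (neg_le_neg hqs) (neg_le_neg hpq) (neg_le_neg hxs) (neg_le_neg hqx)

lemma lPt_nonneg (n k : ℕ) : 0 ≤ lPt n k := by unfold lPt; positivity

lemma lPt_le_mPt (n k : ℕ) : lPt n k ≤ mPt n k := by unfold lPt mPt; gcongr; linarith

lemma mPt_le_rPt (n k : ℕ) : mPt n k ≤ rPt n k := by unfold mPt rPt; gcongr; linarith

lemma rPt_sub_lPt (n k : ℕ) : rPt n k - lPt n k = 2 / 2 ^ n := by unfold rPt lPt; ring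

lemma rPt_le_one {n k : ℕ} (hn : 1 ≤ n) (hk : k < 2 ^ (n - 1)) : rPt n k ≤ 1 := by
  have hk' : (k : ℝ) + 1 ≤ 2 ^ (n - 1) := by exact_mod_cast hk
  have h2n : (2 : ℝ) ^ n = 2 * 2 ^ (n - 1) := by rw [← pow_succ']; congr 1; omega
  rw [rPt, div_le_one (by positivity), h2n]
  linarith

lemma abs_Psi_le {f g : ℝ → ℝ} (hf : Continuous f) {n : ℕ} (hn : n ≠ 0) (k : ℕ) {t Mg : ℝ}
    (hMg : |g t| ≤ Mg) :
    |Psi f g n k t| ≤ √((hFun f (rPt n k) - hFun f (lPt n k)) / 4) * Mg := by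
  set B := √((hFun f (rPt n k) - hFun f (lPt n k)) / 4)
  have piece {C x : ℝ} (hC : 0 ≤ C) (hx : 0 ≤ x) (hCx : C * x ≤ B) : |C * (g t * x)| ≤ B * Mg := by
    rw [abs_mul, abs_mul, abs_of_nonneg hC, abs_of_nonneg hx, mul_left_comm, mul_comm]
    exact mul_le_mul hCx hMg (abs_nonneg _) ((mul_nonneg hC hx).trans hCx)
  have hlm := hFun_monotone hf (lPt_le_mPt n k)
  have hmr := hFun_monotone hf (mPt_le_rPt n k)
  unfold Psi
  rw [if_neg hn]
  split_ifs with hL hR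
  · exact piece (Real.sqrt_nonneg _) (sub_nonneg.2 (hFun_monotone hf hL.1))
      (sqrt_div_mul_sub_le hlm hmr (hFun_monotone hf hL.1) (hFun_monotone hf hL.2.le))
  · exact piece (Real.sqrt_nonneg _) (sub_nonneg.2 (hFun_monotone hf hR.2.le))
      (sqrt_div_mul_sub_le' hlm hmr (hFun_monotone hf hR.1) (hFun_monotone hf hR.2.le))
  · simpa only [abs_zero] using mul_nonneg (Real.sqrt_nonneg _) ((abs_nonneg _).trans hMg)

lemma two_rpow_neg_succ_div_two (n : ℕ) : (2 : ℝ) ^ (-((n : ℝ) + 1) / 2) = √(2 / 2 ^ n / 4) := by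
  have h : (2 : ℝ) / 2 ^ n / 4 = 2 ^ (-((n : ℝ) + 1)) := by
    rw [Real.rpow_neg zero_le_two, Real.rpow_add zero_lt_two, Real.rpow_natCast, Real.rpow_one]
    field_simp
    ring
  rw [h, Real.sqrt_eq_rpow, ← Real.rpow_mul zero_le_two, div_eq_mul_one_div]

theorem Psi_uniform_bound_general
    (f g : ℝ → ℝ) (hf : Continuous f)
    (Mf Mg : ℝ)
    (hMf : ∀ t ∈ Set.Icc (0:ℝ) 1, |f t| ≤ Mf)
    (hMg : ∀ t ∈ Set.Icc (0:ℝ) 1, |g t| ≤ Mg) :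
    ∀ n : ℕ, 1 ≤ n → ∀ k : ℕ, k < 2 ^ (n - 1) → ∀ t ∈ Set.Icc (0:ℝ) 1,
      |Psi f g n k t| ≤ (2:ℝ) ^ (-((n:ℝ) + 1) / 2) * Mg * Mf := by
  intro n hn k hk t ht
  have hMf0 : 0 ≤ Mf := (abs_nonneg _).trans (hMf 0 ⟨le_rfl, zero_le_one⟩)
  have hMg0 : 0 ≤ Mg := (abs_nonneg _).trans (hMg t ht)
  have hlr : hFun f (rPt n k) - hFun f (lPt n k) ≤ Mf ^ 2 * (2 / 2 ^ n) :=
    rPt_sub_lPt n k ▸ hFun_sub_hFun_le hf ((lPt_le_mPt n k).trans (mPt_le_rPt n k))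
      fun u hu => hMf u ⟨(lPt_nonneg n k).trans hu.1, hu.2.trans (rPt_le_one hn hk)⟩
  calc |Psi f g n k t|
      ≤ √((hFun f (rPt n k) - hFun f (lPt n k)) / 4) * Mg := abs_Psi_le hf (by omega) k (hMg t ht)
    _ ≤ √(Mf ^ 2 * (2 / 2 ^ n / 4)) * Mg := by
      gcongr
      rw [← mul_div_assoc]
      gcongr
    _ = (2:ℝ) ^ (-((n:ℝ) + 1) / 2) * Mg * Mf := by
      rw [Real.sqrt_mul (sq_nonneg _), Real.sqrt_sq hMf0, two_rpow_neg_succ_div_two]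
      ring

/-- the uniform bound
`sup_{k < 2^{n-1}} sup_{t ∈ [0,1]} |Ψ_{n,k}(t)| ≤ 2^{-(n+1)/2}·‖g‖_∞·‖f‖_∞`
for `n ≥ 1`, stated through arbitrary sup-norm bounds `Mf, Mg` of `f, g` on
`[0,1]`. -/
theorem Psi_uniform_bound
    (f g : ℝ → ℝ) (hf : Continuous f) (hg : Continuous g)
    (Mf Mg : ℝ)
    (hMf : ∀ t ∈ Set.Icc (0:ℝ) 1, |f t| ≤ Mf)
    (hMg : ∀ t ∈ Set.Icc (0:ℝ) 1, |g t| ≤ Mg) :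
    ∀ n : ℕ, 1 ≤ n → ∀ k : ℕ, k < 2 ^ (n - 1) → ∀ t ∈ Set.Icc (0:ℝ) 1,
      |Psi f g n k t| ≤ (2:ℝ) ^ (-((n:ℝ) + 1) / 2) * Mg * Mf :=
  Psi_uniform_bound_general f g hf Mf Mg hMf hMg
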